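/- In the radius lower-bound graph G_{x,y}, for every i ∈ {0,…,k−1} and every node u distinct from b^i and from c_B, the hop distance satisfies dist(a^i, u) ≤ 3. -/
import Mathlib


/-- Vertices of the radius lower-bound graph `G_{x,y}`: the bit-gadget vertices
`a i`, `b i`, `fA h`, `tA h`, `fB h`, `tB h`, together with the seven extra nodes
`cA`, `cA'` (= c̄_A), `cB`, `cB'` (= c̄_B), `w0`, `w1`, `w2`. -/
inductive RVertex (k logk : ℕ) where
  | a (i : Fin k)
  | b (i : Fin k)
  | fA (h : Fin logk)
  | tA (h : Fin logk)
  | fB (h : Fin logk)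
  | tB (h : Fin logk)
  | cA
  | cA'
  | cB
  | cB'
  | w0
  | w1
  | w2
deriving DecidableEq

/-- Base relation generating the edges of the radius lower-bound graph `G_{x,y}`. -/
def rRel (k logk : ℕ) (x y : Fin k → Bool) : RVertex k logk → RVertex k logk → Prop
  | .a i, .fA h => i.val.testBit h.val = false
  | .a i, .tA h => i.val.testBit h.val = true
  | .b i, .fB h => i.val.testBit h.val = false
  | .b i, .tB h => i.val.testBit h.val = true
  | .fA h, .tB h' => h = h'
  | .tA h, .fB h' => h = h'
  | .fA h, .tA h' => h = h'
  | .a _, .cA => True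
  | .b _, .cB => True
  | .fA _, .cA' => True
  | .tA _, .cA' => True
  | .fB _, .cB' => True
  | .tB _, .cB' => True
  | .cA, .cA' => True
  | .cB, .cB' => True
  | .cA', .cB' => True
  | .w0, .w1 => True
  | .w1, .w2 => True
  | .w0, .a _ => True
  | .a i, .cA' => x i = true
  | .b i, .cB' => y i = true
  | _, _ => False

/-- The radius lower-bound graph `G_{x,y}`. -/
def rGraph (k logk : ℕ) (x y : Fin k → Bool) : SimpleGraph (RVertex k logk) :=
  SimpleGraph.fromRel (rRel k logk x y)



section
variable {V : Type*} {G : SimpleGraph V} {a b c d : V}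

lemma edist_le_one' (h : G.Adj a b) : G.edist a b ≤ 1 :=
  le_of_eq (SimpleGraph.edist_eq_one_iff_adj.mpr h)

lemma edist_le_two' (h1 : G.Adj a b) (h2 : G.Adj b c) : G.edist a c ≤ 2 :=
  le_trans (G.edist_triangle (v := b)) (by
    have ha := edist_le_one' h1; have hb := edist_le_one' h2
    calc G.edist a b + G.edist b c ≤ 1 + 1 := add_le_add ha hb
    _ = 2 := by norm_num)

lemma edist_le_three' (h1 : G.Adj a b) (h2 : G.Adj b c) (h3 : G.Adj c d) : G.edist a d ≤ 3 :=
  le_trans (G.edist_triangle (v := c)) (by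
    have ha := edist_le_two' h1 h2; have hb := edist_le_one' h3
    calc G.edist a c + G.edist c d ≤ 2 + 1 := add_le_add ha hb
    _ = 3 := by norm_num)
end

lemma radj_of_rel {k logk : ℕ} {x y : Fin k → Bool} {u v : RVertex k logk}
    (hne : u ≠ v) (h : rRel k logk x y u v) : (rGraph k logk x y).Adj u v := by
  rw [rGraph, SimpleGraph.fromRel_adj]; exact ⟨hne, Or.inl h⟩

lemma radj_of_rel' {k logk : ℕ} {x y : Fin k → Bool} {u v : RVertex k logk}
    (hne : u ≠ v) (h : rRel k logk x y v u) : (rGraph k logk x y).Adj u v := by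
  rw [rGraph, SimpleGraph.fromRel_adj]; exact ⟨hne, Or.inr h⟩

/-- in the radius lower-bound graph `G_{x,y}`, for every
`i ∈ {0,…,k−1}` and every node `u` distinct from `b i` and from `cB`,
the hop distance satisfies `dist(a i, u) ≤ 3`. -/
theorem rGraph_dist_a_le_three (k logk : ℕ) (hk : 2 ≤ k) (hpow : k = 2 ^ logk)
    (x y : Fin k → Bool) (i : Fin k) (u : RVertex k logk)
    (hb : u ≠ RVertex.b i) (hc : u ≠ RVertex.cB) :
    (rGraph k logk x y).edist (RVertex.a i) u ≤ 3 := by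
  cases u with
  | a j =>
    by_cases hij : j = i
    · subst hij; simp [SimpleGraph.edist_self]
    · refine le_trans (edist_le_two'
        (radj_of_rel (by simp) (show rRel k logk x y (.a i) .cA from trivial))
        (radj_of_rel' (by simp) (show rRel k logk x y (.a j) .cA from trivial))) (by norm_num)
  | b j =>
    have hji : j ≠ i := fun h => hb (by rw [h])
    have hdiff : ∃ h : Fin logk, i.val.testBit h.val ≠ j.val.testBit h.val := by
      by_contra hcon
      push_neg at hcon
      apply hji; apply Fin.ext; symm
      apply Nat.eq_of_testBit_eq
      intro m
      by_cases hm : m < logk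
      · exact hcon ⟨m, hm⟩
      · have h2 : 2 ^ logk ≤ 2 ^ m := Nat.pow_le_pow_right (by norm_num) (le_of_not_gt hm)
        have hi : i.val < 2 ^ m := lt_of_lt_of_le (hpow ▸ i.isLt) h2
        have hj : j.val < 2 ^ m := lt_of_lt_of_le (hpow ▸ j.isLt) h2
        rw [Nat.testBit_lt_two_pow hi, Nat.testBit_lt_two_pow hj]
    obtain ⟨h, hne⟩ := hdiff
    cases hbi : i.val.testBit h.val with
    | false =>
      have hbj : j.val.testBit h.val = true := by
        cases hbj : j.val.testBit h.val with
        | false => exact absurd (hbi.trans hbj.symm) hne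
        | true => rfl
      exact edist_le_three'
        (radj_of_rel (by simp) (show rRel k logk x y (.a i) (.fA h) from hbi))
        (radj_of_rel (by simp) (show rRel k logk x y (.fA h) (.tB h) from rfl))
        (radj_of_rel' (by simp) (show rRel k logk x y (.b j) (.tB h) from hbj))
    | true =>
      have hbj : j.val.testBit h.val = false := by
        cases hbj : j.val.testBit h.val with
        | true => exact absurd (hbi.trans hbj.symm) hne
        | false => rfl
      exact edist_le_three'
        (radj_of_rel (by simp) (show rRel k logk x y (.a i) (.tA h) from hbi))
        (radj_of_rel (by simp) (show rRel k logk x y (.tA h) (.fB h) from rfl))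
        (radj_of_rel' (by simp) (show rRel k logk x y (.b j) (.fB h) from hbj))
  | fA h =>
    cases hbi : i.val.testBit h.val with
    | false => exact le_trans (edist_le_one'
        (radj_of_rel (by simp) (show rRel k logk x y (.a i) (.fA h) from hbi))) (by norm_num)
    | true => exact le_trans (edist_le_two'
        (radj_of_rel (by simp) (show rRel k logk x y (.a i) (.tA h) from hbi))
        (radj_of_rel' (by simp) (show rRel k logk x y (.fA h) (.tA h) from rfl))) (by norm_num)
  | tA h =>
    cases hbi : i.val.testBit h.val with
    | true => exact le_trans (edist_le_one'
        (radj_of_rel (by simp) (show rRel k logk x y (.a i) (.tA h) from hbi))) (by norm_num)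
    | false => exact le_trans (edist_le_two'
        (radj_of_rel (by simp) (show rRel k logk x y (.a i) (.fA h) from hbi))
        (radj_of_rel (by simp) (show rRel k logk x y (.fA h) (.tA h) from rfl))) (by norm_num)
  | fB h =>
    cases hbi : i.val.testBit h.val with
    | true => exact le_trans (edist_le_two'
        (radj_of_rel (by simp) (show rRel k logk x y (.a i) (.tA h) from hbi))
        (radj_of_rel (by simp) (show rRel k logk x y (.tA h) (.fB h) from rfl))) (by norm_num)
    | false =>
      exact edist_le_three'
        (radj_of_rel (by simp) (show rRel k logk x y (.a i) (.fA h) from hbi))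
        (radj_of_rel (by simp) (show rRel k logk x y (.fA h) (.tA h) from rfl))
        (radj_of_rel (by simp) (show rRel k logk x y (.tA h) (.fB h) from rfl))
  | tB h =>
    cases hbi : i.val.testBit h.val with
    | false => exact le_trans (edist_le_two'
        (radj_of_rel (by simp) (show rRel k logk x y (.a i) (.fA h) from hbi))
        (radj_of_rel (by simp) (show rRel k logk x y (.fA h) (.tB h) from rfl))) (by norm_num)
    | true =>
      exact edist_le_three'
        (radj_of_rel (by simp) (show rRel k logk x y (.a i) (.tA h) from hbi))
        (radj_of_rel' (by simp) (show rRel k logk x y (.fA h) (.tA h) from rfl))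
        (radj_of_rel (by simp) (show rRel k logk x y (.fA h) (.tB h) from rfl))
  | cA => exact le_trans (edist_le_one'
      (radj_of_rel (by simp) (show rRel k logk x y (.a i) .cA from trivial))) (by norm_num)
  | cA' => exact le_trans (edist_le_two'
      (radj_of_rel (by simp) (show rRel k logk x y (.a i) .cA from trivial))
      (radj_of_rel (by simp) (show rRel k logk x y .cA .cA' from trivial))) (by norm_num)
  | cB => exact absurd rfl hc
  | cB' =>
    exact edist_le_three'
      (radj_of_rel (by simp) (show rRel k logk x y (.a i) .cA from trivial))
      (radj_of_rel (by simp) (show rRel k logk x y .cA .cA' from trivial))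
      (radj_of_rel (by simp) (show rRel k logk x y .cA' .cB' from trivial))
  | w0 => exact le_trans (edist_le_one'
      (radj_of_rel' (by simp) (show rRel k logk x y .w0 (.a i) from trivial))) (by norm_num)
  | w1 => exact le_trans (edist_le_two'
      (radj_of_rel' (by simp) (show rRel k logk x y .w0 (.a i) from trivial))
      (radj_of_rel (by simp) (show rRel k logk x y .w0 .w1 from trivial))) (by norm_num)
  | w2 =>
    exact edist_le_three'
      (radj_of_rel' (by simp) (show rRel k logk x y .w0 (.a i) from trivial))
      (radj_of_rel (by simp) (show rRel k logk x y .w0 .w1 from trivial))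
      (radj_of_rel (by simp) (show rRel k logk x y .w1 .w2 from trivial))
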